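/- arXiv:2304.03996 — 5 statements merged into one kernel-verified Lean document; each statement's English description precedes it below -/
import Mathlib

section
/- For every m ∈ ℕ, the clique number and the fractional clique number of the contradiction graph G_m(H) satisfy ω_m ≤ ω*_m ≤ 2^m; that is, every clique of G_m(H) has at most 2^m vertices and every fractional clique δ of G_m(H) has size |δ| ≤ 2^m. -/
open MeasureTheory
open scoped ENNReal

namespace ContradictionGraph

variable {X : Type*}

/-- A hypothesis `h : X → Bool` is consistent with the dataset `S` of size `m` if it labels
every example in `S` correctly. -/
def Consistent (h : X → Bool) {m : ℕ} (S : Fin m → X × Bool) : Prop :=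
  ∀ i, h (S i).1 = (S i).2

/-- A dataset `S` is realizable by the concept class `H` if some hypothesis in `H` is
consistent with it. -/
def Realizable (H : Set (X → Bool)) {m : ℕ} (S : Fin m → X × Bool) : Prop :=
  ∃ h ∈ H, Consistent h S

/-- Two datasets contradict each other if there is a point `x` such that one of them contains
the labeled example `(x, 0)` and the other contains `(x, 1)`. -/
def Contradicts {m : ℕ} (S S' : Fin m → X × Bool) : Prop :=
  ∃ x : X, ((∃ i, S i = (x, false)) ∧ (∃ j, S' j = (x, true))) ∨
    ((∃ i, S i = (x, true)) ∧ (∃ j, S' j = (x, false)))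

/-- The vertex set of the contradiction graph `G_m(H)`: all `H`-realizable datasets of
size `m`. -/
abbrev Vm (H : Set (X → Bool)) (m : ℕ) : Type _ :=
  {S : Fin m → X × Bool // Realizable H S}

/-- A clique in the contradiction graph `G_m(H)`: a set of vertices every two distinct members
of which contradict each other. -/
def IsClique (H : Set (X → Bool)) (m : ℕ) (C : Set (Vm H m)) : Prop :=
  ∀ S ∈ C, ∀ S' ∈ C, S ≠ S' → Contradicts S.1 S'.1

/-- An independent set in the contradiction graph `G_m(H)`: a set of vertices no two of which
are adjacent (i.e. no two distinct members contradict each other). -/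
def IsIndep (H : Set (X → Bool)) (m : ℕ) (I : Set (Vm H m)) : Prop :=
  ∀ S ∈ I, ∀ S' ∈ I, S ≠ S' → ¬ Contradicts S.1 S'.1

/-- The clique number `ω_m` of `G_m(H)`: the supremum of the sizes of cliques (in `ℕ∞`). -/
noncomputable def cliqueNum (H : Set (X → Bool)) (m : ℕ) : ℕ∞ :=
  ⨆ (C : Set (Vm H m)) (_ : IsClique H m C), C.encard

/-- The clique dimension `CD(H) = sup { m : ω_m = 2^m } ∈ ℕ ∪ {∞}`. -/
noncomputable def cliqueDim (H : Set (X → Bool)) : ℕ∞ :=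
  ⨆ (m : ℕ) (_ : cliqueNum H m = 2 ^ m), (m : ℕ∞)

/-- A fractional clique of `G_m(H)`: a nonnegative weight function on the vertices such that
the total weight of every independent set is at most `1`. -/
def IsFracClique (H : Set (X → Bool)) (m : ℕ) (δ : Vm H m → ℝ≥0∞) : Prop :=
  ∀ I : Set (Vm H m), IsIndep H m I → ∑' S : I, δ S.1 ≤ 1

/-- The fractional clique number `ω*_m` of `G_m(H)`: the supremum of the sizes
`|δ| = Σ_S δ(S)` of fractional cliques. -/
noncomputable def fracCliqueNum (H : Set (X → Bool)) (m : ℕ) : ℝ≥0∞ :=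
  ⨆ (δ : Vm H m → ℝ≥0∞) (_ : IsFracClique H m δ), ∑' S, δ S

/-- The fractional clique dimension `CD*(H) = sup { m : ω*_m = 2^m } ∈ ℕ ∪ {∞}`. -/
noncomputable def fracCliqueDim (H : Set (X → Bool)) : ℕ∞ :=
  ⨆ (m : ℕ) (_ : fracCliqueNum H m = 2 ^ m), (m : ℕ∞)

end ContradictionGraph

/-
Fix finitely many realizable datasets and let `P` be the finite set of points they mention.
Each labeling of `P` (encoded as a subset `T ⊆ P`) is consistent with an independent set of
datasets, so a fractional clique gives those datasets total weight at most `1`. A realizable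
dataset of size `m` prescribes the labels of at most `m` points, so it is consistent with at
least `2 ^ (#P - m)` of the `2 ^ #P` labelings; double counting yields `∑ δ ≤ 2 ^ m`.
A clique meets every independent set at most once, so its indicator is a fractional clique.
-/

namespace ContradictionGraph

open Finset

section

variable {X : Type*} {H : Set (X → Bool)} {m : ℕ}

instance (h : X → Bool) (S : Fin m → X × Bool) : Decidable (Consistent h S) :=
  Fintype.decidableForallFintype

theorem Consistent.not_contradicts {h : X → Bool} {S S' : Fin m → X × Bool}
    (hS : Consistent h S) (hS' : Consistent h S') : ¬ Contradicts S S' := by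
  rintro ⟨x, ⟨⟨i, hi⟩, ⟨j, hj⟩⟩ | ⟨⟨i, hi⟩, ⟨j, hj⟩⟩⟩ <;>
  · have hSi := hS i
    have hS'j := hS' j
    simp_all

theorem isIndep_setOf_consistent (h : X → Bool) :
    IsIndep H m {S | Consistent h S.1} :=
  fun _ hS _ hS' _ => Consistent.not_contradicts hS hS'

theorem IsFracClique.sum_filter_consistent_le_one {δ : Vm H m → ℝ≥0∞}
    (hδ : IsFracClique H m δ) (F : Finset (Vm H m)) (h : X → Bool) :
    ∑ S ∈ F with Consistent h S.1, δ S ≤ 1 := by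
  have hI : IsIndep H m ↑(F.filter fun S => Consistent h S.1) :=
    fun S hS S' hS' => isIndep_setOf_consistent h S (mem_filter.1 hS).2 S' (mem_filter.1 hS').2
  simpa only [Finset.tsum_subtype'] using hδ _ hI

theorem two_pow_card_le_mul_card_consistent [DecidableEq X] {P : Finset X}
    {S : Fin m → X × Bool} (hSP : ∀ i, (S i).1 ∈ P) {h : X → Bool} (hS : Consistent h S) :
    2 ^ #P ≤ 2 ^ m * #{T ∈ P.powerset | Consistent (fun x => decide (x ∈ T)) S} := by
  set Q := univ.image fun i => (S i).1
  have hQ : ∀ x ∈ Q, ∃ i, (S i).1 = x := fun x hx => by simpa [Q] using hx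
  calc 2 ^ #P = #P.powerset := (card_powerset P).symm
    _ ≤ #((univ : Finset (Fin m → Bool)) ×ˢ
          {T ∈ P.powerset | Consistent (fun x => decide (x ∈ T)) S}) := by
      -- `T` is determined by its labels on the points `Q` of `S` together with the set obtained
      -- from `T` by relabelling `Q` as `h` does, which is consistent with `S`.
      refine card_le_card_of_injOn
        (fun T => (fun i => decide ((S i).1 ∈ T), T \ Q ∪ Q.filter (h · = true))) ?_ ?_
      · intro T hT
        have hQP : Q ⊆ P := image_subset_iff.2 fun i _ => hSP i
        refine mem_product.2 ⟨mem_univ _, mem_filter.2 ⟨?_, fun i => ?_⟩⟩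
        · exact mem_powerset.2 (union_subset (sdiff_subset.trans (mem_powerset.1 hT))
            ((filter_subset _ _).trans hQP))
        · have hi : (S i).1 ∈ Q := mem_image_of_mem _ (mem_univ i)
          simp [hi, ← hS i]
      · intro T _ T' _ hTT'
        obtain ⟨hlabel, hrest⟩ := Prod.ext_iff.1 hTT'
        ext x
        by_cases hx : x ∈ Q
        · obtain ⟨i, rfl⟩ := hQ x hx
          simpa using congrFun hlabel i
        · simpa [hx] using congrArg (x ∈ ·) hrest
    _ = 2 ^ m * _ := by simp

theorem IsFracClique.sum_le_two_pow {δ : Vm H m → ℝ≥0∞} (hδ : IsFracClique H m δ)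
    (F : Finset (Vm H m)) : ∑ S ∈ F, δ S ≤ 2 ^ m := by
  classical
  set P := F.biUnion fun S => univ.image fun i => (S.1 i).1
  set agree : Finset X → (Fin m → X × Bool) → Prop :=
    fun T S => Consistent (fun x => decide (x ∈ T)) S
  have hcount (S : Vm H m) (hS : S ∈ F) :
      (2 : ℝ≥0∞) ^ #P ≤ 2 ^ m * #{T ∈ P.powerset | agree T S.1} := by
    obtain ⟨h, -, hh⟩ := S.2
    exact_mod_cast two_pow_card_le_mul_card_consistent
      (fun i => mem_biUnion.2 ⟨S, hS, mem_image_of_mem _ (mem_univ i)⟩) hh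
  have hdouble : ∑ S ∈ F, (#{T ∈ P.powerset | agree T S.1} : ℝ≥0∞) * δ S =
      ∑ T ∈ P.powerset, ∑ S ∈ F with agree T S.1, δ S := by
    simp only [← nsmul_eq_mul, ← sum_const]
    exact sum_comm' fun S T => by simp only [mem_filter]; tauto
  refine (ENNReal.mul_le_mul_iff_right (a := 2 ^ #P) (by simp) (by simp)).1 ?_
  calc 2 ^ #P * ∑ S ∈ F, δ S = ∑ S ∈ F, 2 ^ #P * δ S := mul_sum _ _ _
    _ ≤ ∑ S ∈ F, 2 ^ m * #{T ∈ P.powerset | agree T S.1} * δ S :=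
      sum_le_sum fun S hS => mul_le_mul_left (hcount S hS) _
    _ = 2 ^ m * ∑ T ∈ P.powerset, ∑ S ∈ F with agree T S.1, δ S := by
      rw [← hdouble, mul_sum]; simp only [mul_assoc]
    _ ≤ 2 ^ m * ∑ _T ∈ P.powerset, 1 := by
      gcongr with T
      exact hδ.sum_filter_consistent_le_one F _
    _ = 2 ^ #P * 2 ^ m := by simp [card_powerset, mul_comm]

theorem IsFracClique.tsum_le_two_pow {δ : Vm H m → ℝ≥0∞} (hδ : IsFracClique H m δ) :
    ∑' S, δ S ≤ 2 ^ m :=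
  ENNReal.tsum_eq_iSup_sum (f := δ) ▸ iSup_le hδ.sum_le_two_pow

theorem fracCliqueNum_le_two_pow (H : Set (X → Bool)) (m : ℕ) : fracCliqueNum H m ≤ 2 ^ m :=
  iSup₂_le fun _ hδ => hδ.tsum_le_two_pow

theorem IsClique.isFracClique_indicator_one {C : Set (Vm H m)} (hC : IsClique H m C) :
    IsFracClique H m (C.indicator fun _ => 1) := by
  intro I hI
  have hIC : (I ∩ C).Subsingleton := fun S hS S' hS' => by
    by_contra hne
    exact hI S hS.1 S' hS'.1 hne (hC S hS.2 S' hS'.2 hne)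
  calc ∑' S : I, C.indicator (fun _ => 1) S.1
      = ∑' S, (I ∩ C).indicator (fun _ => (1 : ℝ≥0∞)) S := by
        rw [_root_.tsum_subtype, Set.indicator_indicator]
    _ = ((I ∩ C).encard : ℝ≥0∞) := by
        rw [← ENNReal.tsum_set_one, _root_.tsum_subtype (I ∩ C) fun _ => 1]
    _ ≤ 1 := by exact_mod_cast Set.encard_le_one_iff_subsingleton.2 hIC

theorem IsClique.encard_le_fracCliqueNum {C : Set (Vm H m)} (hC : IsClique H m C) :
    (C.encard : ℝ≥0∞) ≤ fracCliqueNum H m := by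
  rw [← ENNReal.tsum_set_one, _root_.tsum_subtype C fun _ => 1]
  exact le_iSup₂ (f := fun δ (_ : IsFracClique H m δ) => ∑' S, δ S) _
    hC.isFracClique_indicator_one

theorem cliqueNum_le_fracCliqueNum (H : Set (X → Bool)) (m : ℕ) :
    (cliqueNum H m : ℝ≥0∞) ≤ fracCliqueNum H m := by
  simp only [cliqueNum, ENat.toENNReal_iSup]
  exact iSup₂_le fun _ hC => hC.encard_le_fracCliqueNum

end

theorem clique_and_fracClique_le_two_pow_general {X : Type*}
    (H : Set (X → Bool)) (m : ℕ) :
    ((cliqueNum H m : ℝ≥0∞) ≤ fracCliqueNum H m ∧ fracCliqueNum H m ≤ 2 ^ m) ∧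
    (∀ C : Set (Vm H m), IsClique H m C → C.encard ≤ 2 ^ m) ∧
    (∀ δ : Vm H m → ℝ≥0∞, IsFracClique H m δ → ∑' S, δ S ≤ 2 ^ m) := by
  refine ⟨⟨cliqueNum_le_fracCliqueNum H m, fracCliqueNum_le_two_pow H m⟩,
    fun C hC => ?_, fun _ hδ => hδ.tsum_le_two_pow⟩
  exact_mod_cast hC.encard_le_fracCliqueNum.trans (fracCliqueNum_le_two_pow H m)

/-- For every `m`, the clique number and the fractional clique number of the
contradiction graph `G_m(H)` satisfy `ω_m ≤ ω*_m ≤ 2^m`; that is, every clique of `G_m(H)` has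
at most `2^m` vertices and every fractional clique `δ` of `G_m(H)` has size `|δ| ≤ 2^m`. -/
theorem clique_and_fracClique_le_two_pow {X : Type*} [Countable X]
    (H : Set (X → Bool)) (hH : H.Nonempty) (m : ℕ) :
    ((cliqueNum H m : ℝ≥0∞) ≤ fracCliqueNum H m ∧ fracCliqueNum H m ≤ 2 ^ m) ∧
    (∀ C : Set (Vm H m), IsClique H m C → C.encard ≤ 2 ^ m) ∧
    (∀ δ : Vm H m → ℝ≥0∞, IsFracClique H m δ → ∑' S, δ S ≤ 2 ^ m) :=
  clique_and_fracClique_le_two_pow_general H m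

end ContradictionGraph
end

section
/- Exactly one of the following two statements holds for the clique numbers ω_m of the contradiction graphs of H: (1) ω_m = 2^m for every m ∈ ℕ; (2) there exists d ∈ ℕ such that ω_m ≤ (2m+1)^d for every m ∈ ℕ (a polynomial bound). -/
open MeasureTheory
open scoped ENNReal

/-!
Record a realizable dataset by its set of points together with one consistent hypothesis
from `H`: a clique of `G_m(H)` becomes a family of labelled samples of size at most `m` any two
of which disagree at a common point. The cylinders `{T ⊆ Y | T agrees with the sample}` of such
a family are disjoint, so a Kraft-type count gives `ω_m ≤ 2^m`. Conversely, if the family is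
large, double counting the disagreeing pairs yields a point at which both labels are frequent;
erasing that point on each side and recursing builds a complete binary tree of pairwise
disagreeing samples. A family larger than `(2m+1)^d` thus contains `2^(d+1)` pairwise
disagreeing samples of size `d+1`, forcing `ω_(d+1) = 2^(d+1)`. Hence a single `d` with
`ω_(d+1) < 2^(d+1)` yields the polynomial bound, while `2^m` outgrows every polynomial.
-/

open Finset

theorem Finset.card_le_two_mul_add_one_of_card_filter_le {α : Type*} [DecidableEq α]
    {I : Finset α} {r : α → α → Prop} [DecidableRel r] {D : ℕ}
    (hr : (I : Set α).Pairwise fun i j => r i j ∨ r j i)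
    (hD : ∀ i ∈ I, #{j ∈ I | r i j} ≤ D) : #I ≤ 2 * D + 1 := by
  rcases I.eq_empty_or_nonempty with rfl | hI
  · simp
  have hcover : ∀ i ∈ I, #I - 1 ≤ #(I.bipartiteAbove r i) + #(I.bipartiteBelow r i) := by
    intro i hi
    rw [← card_erase_of_mem hi]
    refine (card_le_card fun j hj => ?_).trans (card_union_le _ _)
    obtain ⟨hji, hj⟩ := mem_erase.1 hj
    rcases hr hi hj hji.symm with h | h <;> simp [hj, h]
  have hsum : #I * (#I - 1) ≤ #I * (2 * D) := by
    calc #I * (#I - 1) = ∑ _i ∈ I, (#I - 1) := by rw [sum_const, smul_eq_mul]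
      _ ≤ ∑ i ∈ I, (#(I.bipartiteAbove r i) + #(I.bipartiteBelow r i)) := sum_le_sum hcover
      _ = 2 * ∑ i ∈ I, #(I.bipartiteAbove r i) := by
        rw [sum_add_distrib, ← sum_card_bipartiteAbove_eq_sum_card_bipartiteBelow]; ring
      _ ≤ 2 * ∑ _i ∈ I, D := Nat.mul_le_mul_left _ (sum_le_sum hD)
      _ = #I * (2 * D) := by rw [sum_const, smul_eq_mul]; ring
  have := Nat.le_of_mul_le_mul_left hsum hI.card_pos
  omega

theorem Finset.exists_coe_subset_range_fin {α : Type*} [Nonempty α] (u : Finset α) {n : ℕ}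
    (hu : #u ≤ n) : ∃ e : Fin n → α, (u : Set α) ⊆ Set.range e := by
  obtain ⟨f⟩ : Nonempty (u ↪ Fin n) :=
    Function.Embedding.nonempty_of_card_le (by simpa using hu)
  exact ⟨Function.extend f Subtype.val fun _ => Classical.arbitrary α,
    fun x hx => ⟨f ⟨x, hx⟩, f.injective.extend_apply _ _ _⟩⟩

namespace ContradictionGraph

section Disagree

variable {ι X : Type*}

def Disagree (s : ι → Finset X) (t : ι → X → Bool) (i j : ι) : Prop :=
  ∃ x ∈ s i, x ∈ s j ∧ t i x ≠ t j x

variable [DecidableEq X] {I : Finset ι} {s : ι → Finset X} {t : ι → X → Bool} {m : ℕ}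

def cylinder (Y s : Finset X) (t : X → Bool) : Finset (Finset X) :=
  {T ∈ Y.powerset | ∀ x ∈ s, x ∈ T ↔ t x = true}

theorem two_pow_card_sdiff_le_card_cylinder {Y s : Finset X} (hs : s ⊆ Y) (t : X → Bool) :
    2 ^ #(Y \ s) ≤ #(cylinder Y s t) := by
  rw [← card_powerset]
  refine card_le_card_of_injOn (· ∪ {x ∈ s | t x = true}) (fun U hU => ?_)
    fun U hU U' hU' h => ?_
  · simp only [coe_powerset, Set.mem_preimage, Set.mem_powerset_iff, coe_subset] at hU
    simp only [cylinder, mem_coe, mem_filter, mem_powerset, union_subset_iff]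
    refine ⟨⟨hU.trans sdiff_subset, (filter_subset _ _).trans hs⟩, fun x hx => ?_⟩
    have : x ∉ U := fun hxU => (mem_sdiff.1 (hU hxU)).2 hx
    simp [this, hx]
  · simp only [coe_powerset, Set.mem_preimage, Set.mem_powerset_iff, coe_subset,
      subset_sdiff] at hU hU'
    have := congrArg (· \ s) h
    simp only [union_sdiff_distrib, sdiff_eq_empty_iff_subset.2 (filter_subset _ s),
      union_empty, hU.2.sdiff_eq_left, hU'.2.sdiff_eq_left] at this
    exact this

theorem disjoint_cylinder {Y s s' : Finset X} {t t' : X → Bool}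
    (h : ∃ x ∈ s, x ∈ s' ∧ t x ≠ t' x) :
    Disjoint (cylinder Y s t) (cylinder Y s' t') := by
  obtain ⟨x, hx, hx', hne⟩ := h
  refine disjoint_left.2 fun T hT hT' => hne ?_
  simp only [cylinder, mem_filter] at hT hT'
  exact Bool.eq_iff_iff.2 ((hT.2 x hx).symm.trans (hT'.2 x hx'))

theorem card_le_two_pow_of_pairwise_disagree (hI : (I : Set ι).Pairwise (Disagree s t))
    (hs : ∀ i ∈ I, #(s i) ≤ m) : #I ≤ 2 ^ m := by
  set Y := I.biUnion s
  have hsY : ∀ i ∈ I, s i ⊆ Y := fun i hi => subset_biUnion_of_mem s hi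
  have hcyl : ∀ i ∈ I, 2 ^ (#Y - m) ≤ #(cylinder Y (s i) (t i)) := fun i hi =>
    calc 2 ^ (#Y - m) ≤ 2 ^ #(Y \ s i) := by
          rw [card_sdiff_of_subset (hsY i hi)]
          exact Nat.pow_le_pow_right two_pos (Nat.sub_le_sub_left (hs i hi) _)
      _ ≤ _ := two_pow_card_sdiff_le_card_cylinder (hsY i hi) (t i)
  have hdisj : (I : Set ι).PairwiseDisjoint fun i => cylinder Y (s i) (t i) :=
    fun i hi j hj hij => disjoint_cylinder (hI hi hj hij)
  have : #I * 2 ^ (#Y - m) ≤ 2 ^ m * 2 ^ (#Y - m) :=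
    calc #I * 2 ^ (#Y - m) ≤ ∑ i ∈ I, #(cylinder Y (s i) (t i)) := by
          rw [← smul_eq_mul, ← sum_const]; exact sum_le_sum hcyl
      _ = #(I.biUnion fun i => cylinder Y (s i) (t i)) := (card_biUnion hdisj).symm
      _ ≤ #Y.powerset := card_le_card (biUnion_subset.2 fun i _ => filter_subset _ _)
      _ ≤ 2 ^ m * 2 ^ (#Y - m) := by
          rw [card_powerset, ← pow_add]; exact Nat.pow_le_pow_right two_pos (by omega)
  exact Nat.le_of_mul_le_mul_right this (by positivity)

theorem exists_forall_lt_card_filter (hI : (I : Set ι).Pairwise (Disagree s t))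
    (hs : ∀ i ∈ I, #(s i) ≤ m) {K : ℕ} (hK : 2 * m * K + 1 < #I) :
    ∃ x, ∀ b, K < #{i ∈ I | x ∈ s i ∧ t i x = b} := by
  classical
  by_contra! h
  choose minority hminority using h
  -- Orient every disagreeing pair towards a member carrying the rare label at their common point.
  let r i j := ∃ x ∈ s i, x ∈ s j ∧ t j x = minority x
  have : #I ≤ 2 * (m * K) + 1 := by
    refine card_le_two_mul_add_one_of_card_filter_le (r := r) (fun i hi j hj hij => ?_)
      fun i hi => ?_
    · obtain ⟨x, hx, hx', hne⟩ := hI hi hj hij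
      by_cases hj : t j x = minority x
      · exact Or.inl ⟨x, hx, hx', hj⟩
      · exact Or.inr ⟨x, hx', hx, by revert hne hj; cases t i x <;> cases t j x <;> simp⟩
    · calc #{j ∈ I | r i j}
          ≤ #((s i).biUnion fun x => {j ∈ I | x ∈ s j ∧ t j x = minority x}) :=
            card_le_card fun j hj => by
              obtain ⟨hj, x, hx, hjx⟩ := mem_filter.1 hj
              exact mem_biUnion.2 ⟨x, hx, mem_filter.2 ⟨hj, hjx⟩⟩
        _ ≤ ∑ x ∈ s i, #{j ∈ I | x ∈ s j ∧ t j x = minority x} := card_biUnion_le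
        _ ≤ #(s i) * K := sum_le_card_nsmul _ _ _ fun x _ => hminority x
        _ ≤ m * K := Nat.mul_le_mul_right _ (hs i hi)
  rw [mul_assoc] at hK
  omega

-- The recursion is the splitting step `exists_forall_lt_card_filter` with
-- `K = treeBound n (m - 1)`.
def treeBound : ℕ → ℕ → ℕ
  | 0, _ => 0
  | n + 1, m => 2 * m * treeBound n (m - 1) + 1

theorem treeBound_succ_le (n m : ℕ) : treeBound (n + 1) m ≤ (2 * m + 1) ^ n := by
  induction n generalizing m with
  | zero => simp [treeBound]
  | succ n ih =>
    calc treeBound (n + 2) m = 2 * m * treeBound (n + 1) (m - 1) + 1 := rfl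
      _ ≤ 2 * m * (2 * m + 1) ^ n + (2 * m + 1) ^ n := by
          gcongr
          · exact (ih _).trans (Nat.pow_le_pow_left (by omega) _)
          · exact Nat.one_le_pow _ _ (by omega)
      _ = (2 * m + 1) ^ (n + 1) := by ring

theorem exists_pairwise_disagree_of_treeBound_lt {n : ℕ}
    (hI : (I : Set ι).Pairwise (Disagree s t)) (hs : ∀ i ∈ I, #(s i) ≤ m)
    (hn : treeBound n m < #I) :
    ∃ (σ : (Fin n → Bool) → ι) (u : (Fin n → Bool) → Finset X),
      (∀ k, σ k ∈ I ∧ #(u k) ≤ n) ∧ Pairwise (Disagree u fun k => t (σ k)) := by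
  induction n generalizing m I s with
  | zero =>
    obtain ⟨i, hi⟩ := card_pos.1 hn
    exact ⟨fun _ => i, fun _ => ∅, fun _ => ⟨hi, by simp⟩,
      fun k k' h => absurd (Subsingleton.elim k k') h⟩
  | succ n ih =>
    obtain ⟨x, hx⟩ := exists_forall_lt_card_filter hI hs hn
    have hside : ∀ b, ∃ (σ : (Fin n → Bool) → ι) (u : (Fin n → Bool) → Finset X),
        (∀ k, σ k ∈ {i ∈ I | x ∈ s i ∧ t i x = b} ∧ #(u k) ≤ n) ∧
          Pairwise (Disagree u fun k => t (σ k)) := by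
      intro b
      refine ih (s := fun i => (s i).erase x) (m := m - 1) (fun i hi j hj hij => ?_)
        (fun i hi => ?_) (hx b)
      · simp only [coe_filter, Set.mem_ofPred_eq] at hi hj
        obtain ⟨y, hy, hy', hne⟩ := hI hi.1 hj.1 hij
        have hyx : y ≠ x := by rintro rfl; exact hne (hi.2.2.trans hj.2.2.symm)
        exact ⟨y, mem_erase.2 ⟨hyx, hy⟩, mem_erase.2 ⟨hyx, hy'⟩, hne⟩
      · obtain ⟨hi, hxi, -⟩ := mem_filter.1 hi
        rw [card_erase_of_mem hxi]
        exact Nat.sub_le_sub_right (hs i hi) 1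
    choose σ u hσu hpair using hside
    have hlabel : ∀ b k, t (σ b k) x = b := fun b k => (mem_filter.1 (hσu b k).1).2.2
    refine ⟨fun k => σ (k 0) (Fin.tail k), fun k => insert x (u (k 0) (Fin.tail k)),
      fun k => ⟨(mem_filter.1 (hσu _ _).1).1,
        (card_insert_le _ _).trans (by simp [(hσu _ _).2])⟩,
      fun k k' hkk' => ?_⟩
    induction k using Fin.consCases with | cons b k => ?_
    induction k' using Fin.consCases with | cons b' k' => ?_
    simp only [Disagree, Fin.cons_zero, Fin.tail_cons]
    obtain rfl | hb := eq_or_ne b b'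
    · obtain ⟨y, hy, hy', hne⟩ := hpair b fun (h : k = k') => hkk' (by rw [h])
      exact ⟨y, mem_insert_of_mem hy, mem_insert_of_mem hy', hne⟩
    · exact ⟨x, mem_insert_self _ _, mem_insert_self _ _, by rwa [hlabel, hlabel]⟩

end Disagree

section Dataset

variable {X : Type*} {H : Set (X → Bool)} {m : ℕ}

theorem contradicts_iff {S S' : Fin m → X × Bool} :
    Contradicts S S' ↔ ∃ x b, (∃ i, S i = (x, b)) ∧ ∃ j, S' j = (x, !b) := by
  constructor
  · rintro ⟨x, h | h⟩
    · exact ⟨x, false, h⟩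
    · exact ⟨x, true, h⟩
  · rintro ⟨x, b, h⟩
    cases b
    · exact ⟨x, Or.inl h⟩
    · exact ⟨x, Or.inr h⟩

theorem Realizable.not_contradicts_self {S : Fin m → X × Bool} (hS : Realizable H S) :
    ¬Contradicts S S := by
  obtain ⟨h, -, hh⟩ := hS
  intro hSS
  obtain ⟨x, b, ⟨i, hi⟩, j, hj⟩ := contradicts_iff.1 hSS
  have hxi := hh i
  have hxj := hh j
  rw [hi] at hxi
  rw [hj] at hxj
  simp [hxi] at hxj

def points [DecidableEq X] (S : Fin m → X × Bool) : Finset X := univ.image fun j => (S j).1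

theorem card_points_le [DecidableEq X] (S : Fin m → X × Bool) : #(points S) ≤ m :=
  card_image_le.trans (by simp)

noncomputable def label (S : Vm H m) : X → Bool := S.2.choose

theorem label_mem (S : Vm H m) : label S ∈ H := S.2.choose_spec.1

theorem label_apply (S : Vm H m) (j : Fin m) : label S (S.1 j).1 = (S.1 j).2 :=
  S.2.choose_spec.2 j

theorem disagree_of_contradicts [DecidableEq X] {S S' : Vm H m} (h : Contradicts S.1 S'.1) :
    Disagree (fun S : Vm H m => points S.1) label S S' := by
  obtain ⟨x, b, ⟨i, hi⟩, j, hj⟩ := contradicts_iff.1 h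
  have hSx := label_apply S i
  have hS'x := label_apply S' j
  rw [hi] at hSx
  rw [hj] at hS'x
  exact ⟨x, mem_image.2 ⟨i, mem_univ _, by rw [hi]⟩,
    mem_image.2 ⟨j, mem_univ _, by rw [hj]⟩, by simp [hSx, hS'x]⟩

end Dataset

section CliqueNumber

variable {X : Type*} {H : Set (X → Bool)} {m : ℕ}

theorem IsClique.encard_le_cliqueNum {C : Set (Vm H m)} (hC : IsClique H m C) :
    C.encard ≤ cliqueNum H m :=
  le_iSup₂ (f := fun C (_ : IsClique H m C) => C.encard) C hC

theorem exists_finset_of_lt_cliqueNum [DecidableEq X] {N : ℕ}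
    (hN : (N : ℕ∞) < cliqueNum H m) :
    ∃ I : Finset (Vm H m), N < #I ∧
      (I : Set (Vm H m)).Pairwise (Disagree (fun S : Vm H m => points S.1) label) := by
  obtain ⟨C, hC⟩ := lt_iSup_iff.1 hN
  obtain ⟨hC, hNC⟩ := lt_iSup_iff.1 hC
  obtain ⟨T, hTC, hT⟩ := Set.exists_subset_encard_eq (Order.add_one_le_of_lt hNC)
  have hTfin : T.Finite := Set.finite_of_encard_eq_coe hT
  refine ⟨hTfin.toFinset, ?_, fun S hS S' hS' hne => ?_⟩
  · rw [hTfin.encard_eq_coe_toFinset_card] at hT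
    have : #hTfin.toFinset = N + 1 := by exact_mod_cast hT
    omega
  · simp only [Set.Finite.coe_toFinset] at hS hS'
    exact disagree_of_contradicts (hC S (hTC hS) S' (hTC hS') hne)

theorem cliqueNum_le_two_pow (H : Set (X → Bool)) (m : ℕ) : cliqueNum H m ≤ 2 ^ m := by
  classical
  by_contra! h
  obtain ⟨I, hI, hpair⟩ := exists_finset_of_lt_cliqueNum (N := 2 ^ m) (by exact_mod_cast h)
  exact hI.not_ge (card_le_two_pow_of_pairwise_disagree hpair fun S _ => card_points_le S.1)

theorem cliqueNum_zero (hH : H.Nonempty) : cliqueNum H 0 = 1 := by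
  refine le_antisymm (by simpa using cliqueNum_le_two_pow H 0) ?_
  obtain ⟨h, hh⟩ := hH
  let S : Vm H 0 := ⟨Fin.elim0, h, hh, fun i => i.elim0⟩
  simpa using (show IsClique H 0 {S} from Set.pairwise_singleton _ _).encard_le_cliqueNum

theorem card_le_cliqueNum_of_pairwise_disagree [Nonempty X] {κ : Type*} [Fintype κ] {n : ℕ}
    {u : κ → Finset X} {h : κ → X → Bool} (hh : ∀ k, h k ∈ H) (hu : ∀ k, #(u k) ≤ n)
    (hpair : Pairwise (Disagree u h)) : (Fintype.card κ : ℕ∞) ≤ cliqueNum H n := by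
  choose e he using fun k => (u k).exists_coe_subset_range_fin (hu k)
  let V : κ → Vm H n := fun k => ⟨fun j => (e k j, h k (e k j)), h k, hh k, fun _ => rfl⟩
  have hV : Pairwise fun k k' => Contradicts (V k).1 (V k').1 := by
    intro k k' hne
    obtain ⟨x, hx, hx', hlabel⟩ := hpair hne
    obtain ⟨j, rfl⟩ := he k hx
    obtain ⟨j', hj'⟩ := he k' hx'
    refine contradicts_iff.2 ⟨e k j, h k (e k j), ⟨j, rfl⟩, j', ?_⟩
    simp only [V, hj', Prod.mk.injEq, true_and]
    revert hlabel; cases h k (e k j) <;> cases h k' (e k j) <;> simp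
  have hVinj : Function.Injective V := fun k k' hkk' => by_contra fun hne =>
    (V k').2.not_contradicts_self (by simpa only [hkk'] using hV hne)
  calc (Fintype.card κ : ℕ∞) = (Set.range V).encard := by
        rw [← Set.image_univ, hVinj.encard_image, Set.encard_univ, ENat.card_eq_coe_fintype_card]
    _ ≤ cliqueNum H n := IsClique.encard_le_cliqueNum <| by
        rintro _ ⟨k, rfl⟩ _ ⟨k', rfl⟩ hne
        exact hV fun h => hne (h ▸ rfl)

theorem cliqueNum_le_of_cliqueNum_lt_two_pow {d : ℕ} (hd : cliqueNum H (d + 1) < 2 ^ (d + 1))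
    (m : ℕ) : cliqueNum H m ≤ (2 * m + 1) ^ d := by
  classical
  by_contra! hm
  obtain ⟨I, hI, hpair⟩ :=
    exists_finset_of_lt_cliqueNum (N := (2 * m + 1) ^ d) (by exact_mod_cast hm)
  obtain ⟨σ, u, hσu, htree⟩ := exists_pairwise_disagree_of_treeBound_lt hpair
    (fun S _ => card_points_le S.1) ((treeBound_succ_le d m).trans_lt hI)
  obtain ⟨x, -⟩ := htree (show (fun _ => false : Fin (d + 1) → Bool) ≠ fun _ => true from
    fun h => by simpa using congrFun h 0)
  have : Nonempty X := ⟨x⟩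
  have := card_le_cliqueNum_of_pairwise_disagree (H := H) (fun k => label_mem (σ k))
    (fun k => (hσu k).2) htree
  simp only [Fintype.card_fun, Fintype.card_bool, Fintype.card_fin, Nat.cast_pow] at this
  exact hd.not_ge (by exact_mod_cast this)

end CliqueNumber

theorem exists_pow_lt_two_pow (d : ℕ) : ∃ m : ℕ, (2 * m + 1) ^ d < 2 ^ m := by
  set e := d + 1
  -- `2m + 1 = (2e + 1)^2` for this `m`, and `2e + 1 < 2^(e + 1)`.
  refine ⟨2 * e * (e + 1), ?_⟩
  calc (2 * (2 * e * (e + 1)) + 1) ^ d ≤ ((2 * e + 1) ^ 2) ^ e := by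
        rw [show 2 * (2 * e * (e + 1)) + 1 = (2 * e + 1) ^ 2 by ring]
        exact Nat.pow_le_pow_right (by positivity) (by omega)
    _ < (2 ^ (e + 1)) ^ (2 * e) := by
        rw [← pow_mul, mul_comm 2 e]
        refine Nat.pow_lt_pow_left ?_ (by omega)
        have := Nat.lt_two_pow_self (n := e)
        rw [pow_succ]
        omega
    _ = 2 ^ (2 * e * (e + 1)) := by rw [← pow_mul]; ring_nf

theorem cliqueNum_dichotomy_general {X : Type*}
    (H : Set (X → Bool)) (hH : H.Nonempty) :
    Xor' (∀ m : ℕ, cliqueNum H m = 2 ^ m)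
      (∃ d : ℕ, ∀ m : ℕ, cliqueNum H m ≤ (2 * m + 1) ^ d) := by
  by_cases hall : ∀ m : ℕ, cliqueNum H m = 2 ^ m
  · refine Or.inl ⟨hall, fun ⟨d, hd⟩ => ?_⟩
    obtain ⟨m, hm⟩ := exists_pow_lt_two_pow d
    have := hall m ▸ hd m
    exact this.not_gt (by exact_mod_cast hm)
  · refine Or.inr ⟨?_, hall⟩
    obtain ⟨m, hm⟩ := not_forall.1 hall
    obtain ⟨d, rfl⟩ : ∃ d, m = d + 1 :=
      Nat.exists_eq_add_one_of_ne_zero (by rintro rfl; simp [cliqueNum_zero hH] at hm)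
    exact ⟨d, cliqueNum_le_of_cliqueNum_lt_two_pow ((cliqueNum_le_two_pow H _).lt_of_ne hm)⟩

/-- Exactly one of the following two statements holds for the clique numbers
`ω_m` of the contradiction graphs of `H`: (1) `ω_m = 2^m` for every `m`; (2) there exists
`d ∈ ℕ` such that `ω_m ≤ (2m+1)^d` for every `m` (a polynomial bound). -/
theorem cliqueNum_dichotomy {X : Type*} [Countable X]
    (H : Set (X → Bool)) (hH : H.Nonempty) :
    Xor' (∀ m : ℕ, cliqueNum H m = 2 ^ m)
      (∃ d : ℕ, ∀ m : ℕ, cliqueNum H m ≤ (2 * m + 1) ^ d) :=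
  cliqueNum_dichotomy_general H hH

end ContradictionGraph
end

section
/- Let C be a clique in the contradiction graph G_m(H) with |C| ≥ 2. Then there exists a point x ∈ X which is balanced for C in the following sense: at least (|C| − 1)/(2m) of the datasets in C contain the labeled example (x,1), and at least (|C| − 1)/(2m) of the datasets in C contain the labeled example (x,0). -/
open MeasureTheory
open scoped ENNReal

namespace ContradictionGraph

/-- Let `C` be a clique in the contradiction graph `G_m(H)` with `|C| ≥ 2`.
Then there exists a point `x ∈ X` which is balanced for `C`: at least `(|C| − 1)/(2m)` of the
datasets in `C` contain the labeled example `(x, 1)`, and at least `(|C| − 1)/(2m)` of the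
datasets in `C` contain the labeled example `(x, 0)`. -/
theorem exists_balanced_point {X : Type*} [Countable X]
    (H : Set (X → Bool)) (hH : H.Nonempty) (m : ℕ)
    (C : Set (Fin m → X × Bool)) (hCfin : C.Finite)
    (hCreal : ∀ S ∈ C, Realizable H S)
    (hCclique : ∀ S ∈ C, ∀ S' ∈ C, S ≠ S' → Contradicts S S')
    (hCcard : 2 ≤ C.ncard) :
    ∃ x : X,
      ((C.ncard : ℝ) - 1) / (2 * m) ≤ ({S ∈ C | ∃ i, S i = (x, true)}.ncard : ℝ) ∧
      ((C.ncard : ℝ) - 1) / (2 * m) ≤ ({S ∈ C | ∃ i, S i = (x, false)}.ncard : ℝ) := by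
  classical
  rcases Nat.eq_zero_or_pos m with hm0 | hm
  · exfalso
    subst hm0
    have hsub : C.Subsingleton := fun S hS S' hS' => funext fun i => i.elim0
    rcases hsub.eq_empty_or_singleton with h | ⟨a, h⟩ <;> subst h <;> simp at hCcard
  set n := C.ncard with hn
  set Cf := hCfin.toFinset with hCfdef
  have hCfcard : Cf.card = n := (Set.ncard_eq_toFinset_card C hCfin).symm
  have hmemCf : ∀ S, S ∈ Cf ↔ S ∈ C := fun S => hCfin.mem_toFinset
  set f : X → Bool → Finset (Fin m → X × Bool) :=
    fun x b => Cf.filter (fun S => ∃ i, S i = (x, b)) with hfdef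
  set pts : (Fin m → X × Bool) → Finset X :=
    fun S => Finset.image (fun i => (S i).1) Finset.univ with hptsdef
  set P : Finset X := Cf.biUnion pts with hPdef
  -- membership of witness points in P
  have hPmem : ∀ S ∈ Cf, ∀ (i : Fin m) (x : X) (b : Bool), S i = (x, b) → x ∈ P := by
    intro S hS i x b hi
    exact Finset.mem_biUnion.2 ⟨S, hS, Finset.mem_image.2 ⟨i, Finset.mem_univ _, by rw [hi]⟩⟩
  -- ncard of the goal sets equals filter cards
  have hset : ∀ (x : X) (b : Bool),
      ({S ∈ C | ∃ i, S i = (x, b)}).ncard = (f x b).card := by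
    intro x b
    rw [← Set.ncard_coe_finset (f x b)]
    congr 1
    ext S
    simp [hfdef, hmemCf S, Set.mem_setOf_eq]
  -- Step A : counting contradicting pairs
  have hA : n * n - n ≤ ∑ x ∈ P, 2 * ((f x true).card * (f x false).card) := by
    have hsub : Cf.offDiag ⊆
        P.biUnion (fun x => (f x true ×ˢ f x false) ∪ (f x false ×ˢ f x true)) := by
      rintro ⟨S, S'⟩ hmem
      rw [Finset.mem_offDiag] at hmem
      obtain ⟨hS, hS', hne⟩ := hmem
      obtain ⟨x, hx⟩ := hCclique S ((hmemCf S).1 hS) S' ((hmemCf S').1 hS') hne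
      refine Finset.mem_biUnion.2 ⟨x, ?_, ?_⟩
      · rcases hx with ⟨⟨i, hi⟩, -⟩ | ⟨⟨i, hi⟩, -⟩ <;> exact hPmem S hS i x _ hi
      · rcases hx with ⟨⟨i, hi⟩, ⟨j, hj⟩⟩ | ⟨⟨i, hi⟩, ⟨j, hj⟩⟩
        · exact Finset.mem_union_right _ (Finset.mem_product.2
            ⟨Finset.mem_filter.2 ⟨hS, i, hi⟩, Finset.mem_filter.2 ⟨hS', j, hj⟩⟩)
        · exact Finset.mem_union_left _ (Finset.mem_product.2
            ⟨Finset.mem_filter.2 ⟨hS, i, hi⟩, Finset.mem_filter.2 ⟨hS', j, hj⟩⟩)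
    calc n * n - n = Cf.offDiag.card := by rw [Finset.offDiag_card, hCfcard]
      _ ≤ _ := Finset.card_le_card hsub
      _ ≤ ∑ x ∈ P, ((f x true ×ˢ f x false) ∪ (f x false ×ˢ f x true)).card :=
          Finset.card_biUnion_le
      _ ≤ ∑ x ∈ P, 2 * ((f x true).card * (f x false).card) := by
          refine Finset.sum_le_sum fun x _ => ?_
          calc ((f x true ×ˢ f x false) ∪ (f x false ×ˢ f x true)).card
              ≤ (f x true ×ˢ f x false).card + (f x false ×ˢ f x true).card :=
                Finset.card_union_le _ _
            _ = 2 * ((f x true).card * (f x false).card) := by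
                rw [Finset.card_product, Finset.card_product]; ring
  -- Step B : total weight bound
  have hrow : ∀ S ∈ Cf,
      (P.filter (fun x => ∃ i, S i = (x, true))).card +
      (P.filter (fun x => ∃ i, S i = (x, false))).card ≤ m := by
    intro S hS
    obtain ⟨h, -, hcons⟩ := hCreal S ((hmemCf S).1 hS)
    have hdisj : Disjoint (P.filter (fun x => ∃ i, S i = (x, true)))
        (P.filter (fun x => ∃ i, S i = (x, false))) := by
      rw [Finset.disjoint_left]
      rintro x hx1 hx0
      obtain ⟨-, i, hi⟩ := Finset.mem_filter.1 hx1
      obtain ⟨-, j, hj⟩ := Finset.mem_filter.1 hx0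
      have h1 := hcons i
      have h0 := hcons j
      rw [hi] at h1
      rw [hj] at h0
      simp only at h1 h0
      rw [h1] at h0
      exact Bool.noConfusion h0
    rw [← Finset.card_union_of_disjoint hdisj]
    have hss : (P.filter (fun x => ∃ i, S i = (x, true))) ∪
        (P.filter (fun x => ∃ i, S i = (x, false))) ⊆ pts S := by
      intro x hx
      rcases Finset.mem_union.1 hx with hx | hx <;>
        obtain ⟨-, i, hi⟩ := Finset.mem_filter.1 hx <;>
        exact Finset.mem_image.2 ⟨i, Finset.mem_univ _, by rw [hi]⟩
    calc _ ≤ (pts S).card := Finset.card_le_card hss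
      _ ≤ m := by
          simpa [hptsdef] using Finset.card_image_le
            (s := (Finset.univ : Finset (Fin m))) (f := fun i => (S i).1)
  have hswap : ∀ b : Bool, ∑ x ∈ P, (f x b).card =
      ∑ S ∈ Cf, (P.filter (fun x => ∃ i, S i = (x, b))).card := by
    intro b
    simp only [hfdef, Finset.card_filter]
    exact Finset.sum_comm
  have hB : ∑ x ∈ P, ((f x true).card + (f x false).card) ≤ n * m := by
    rw [Finset.sum_add_distrib, hswap true, hswap false, ← Finset.sum_add_distrib]
    calc _ ≤ ∑ _S ∈ Cf, m := Finset.sum_le_sum hrow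
      _ = n * m := by rw [Finset.sum_const, smul_eq_mul, hCfcard]
  -- a witness point with both labels present
  obtain ⟨S, hSC, S', hS'C, hne⟩ := (Set.one_lt_ncard hCfin).1 (by omega)
  obtain ⟨x₀, hx₀⟩ := hCclique S hSC S' hS'C hne
  have hx₀P : x₀ ∈ P := by
    rcases hx₀ with ⟨⟨i, hi⟩, -⟩ | ⟨⟨i, hi⟩, -⟩ <;>
      exact hPmem S ((hmemCf S).2 hSC) i x₀ _ hi
  have hx₀t : 1 ≤ (f x₀ true).card := by
    rcases hx₀ with ⟨-, j, hj⟩ | ⟨⟨i, hi⟩, -⟩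
    · exact Finset.card_pos.2 ⟨S', Finset.mem_filter.2 ⟨(hmemCf S').2 hS'C, j, hj⟩⟩
    · exact Finset.card_pos.2 ⟨S, Finset.mem_filter.2 ⟨(hmemCf S).2 hSC, i, hi⟩⟩
  have hx₀f : 1 ≤ (f x₀ false).card := by
    rcases hx₀ with ⟨⟨i, hi⟩, -⟩ | ⟨-, j, hj⟩
    · exact Finset.card_pos.2 ⟨S, Finset.mem_filter.2 ⟨(hmemCf S).2 hSC, i, hi⟩⟩
    · exact Finset.card_pos.2 ⟨S', Finset.mem_filter.2 ⟨(hmemCf S').2 hS'C, j, hj⟩⟩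
  -- real versions
  set t : ℝ := ((n : ℝ) - 1) / (2 * m) with htdef
  have hn2 : (2 : ℝ) ≤ (n : ℝ) := by exact_mod_cast hCcard
  have hmR : (0 : ℝ) < (m : ℝ) := by exact_mod_cast hm
  have ht : 0 < t := div_pos (by linarith) (by linarith)
  set A : X → ℝ := fun x => ((f x true).card : ℝ) with hAdef
  set B : X → ℝ := fun x => ((f x false).card : ℝ) with hBdef
  have hAnn : ∀ x, 0 ≤ A x := fun x => Nat.cast_nonneg _
  have hBnn : ∀ x, 0 ≤ B x := fun x => Nat.cast_nonneg _
  have hAR : (n : ℝ) * ((n : ℝ) - 1) ≤ ∑ x ∈ P, 2 * (A x * B x) := by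
    have h1 : ((n * n - n : ℕ) : ℝ) ≤
        ((∑ x ∈ P, 2 * ((f x true).card * (f x false).card) : ℕ) : ℝ) := Nat.cast_le.2 hA
    have hle : n ≤ n * n := Nat.le_mul_of_pos_left n (by omega)
    rw [Nat.cast_sub hle] at h1
    push_cast at h1
    calc (n : ℝ) * ((n : ℝ) - 1) = (n : ℝ) * (n : ℝ) - (n : ℝ) := by ring
      _ ≤ _ := h1.trans_eq (by simp [hAdef, hBdef])
  have hBR : ∑ x ∈ P, (A x + B x) ≤ (n : ℝ) * m := by
    have h1 : ((∑ x ∈ P, ((f x true).card + (f x false).card) : ℕ) : ℝ) ≤ ((n * m : ℕ) : ℝ) :=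
      Nat.cast_le.2 hB
    push_cast at h1
    simpa [hAdef, hBdef] using h1
  -- by contradiction
  by_contra hcon
  push_neg at hcon
  have hcon' : ∀ x, A x < t ∨ B x < t := by
    intro x
    by_cases hxt : t ≤ A x
    · right
      have := hcon x (by rw [hset x true] at *; exact hxt)
      rwa [hset x false] at this
    · left; linarith
  have hle : ∀ x ∈ P, 2 * (A x * B x) ≤ 2 * t * (A x + B x) := by
    intro x _
    rcases hcon' x with hx | hx
    · nlinarith [hAnn x, hBnn x, ht]
    · nlinarith [hAnn x, hBnn x, ht]
  have hstrict : 2 * (A x₀ * B x₀) < 2 * t * (A x₀ + B x₀) := by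
    have hA1 : (1 : ℝ) ≤ A x₀ := by simp only [hAdef]; exact_mod_cast hx₀t
    have hB1 : (1 : ℝ) ≤ B x₀ := by simp only [hBdef]; exact_mod_cast hx₀f
    rcases hcon' x₀ with hx | hx
    · nlinarith
    · nlinarith
  have hlt : ∑ x ∈ P, 2 * (A x * B x) < ∑ x ∈ P, 2 * t * (A x + B x) :=
    Finset.sum_lt_sum hle ⟨x₀, hx₀P, hstrict⟩
  have hfinal : ∑ x ∈ P, 2 * t * (A x + B x) ≤ (n : ℝ) * ((n : ℝ) - 1) := by
    rw [← Finset.mul_sum]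
    have h1 : 2 * t * (∑ x ∈ P, (A x + B x)) ≤ 2 * t * ((n : ℝ) * m) := by
      apply mul_le_mul_of_nonneg_left hBR (by positivity)
    calc 2 * t * (∑ x ∈ P, (A x + B x)) ≤ 2 * t * ((n : ℝ) * m) := h1
      _ = (n : ℝ) * ((n : ℝ) - 1) := by
          rw [htdef]; field_simp
  linarith


end ContradictionGraph
end

section
/- If H has Littlestone dimension LD(H) = d < ∞, then for every m ∈ ℕ the clique number of the contradiction graph satisfies ω_m ≤ (2m+1)^d. -/
open MeasureTheory
open scoped ENNReal

namespace ContradictionGraph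
variable {X : Type*}

/-- `H` shatters a mistake tree of depth `d`: there is an assignment of points of `X` to the
internal nodes of the complete binary tree of depth `d` (the point fed to branch `ε` at level
`i` depends only on the first `i` bits of `ε`) such that every root-to-leaf dataset is
realizable by `H`. -/
def ShattersTree (H : Set (X → Bool)) (d : ℕ) : Prop :=
  ∃ t : (Fin d → Bool) → Fin d → X,
    (∀ ε ε' : Fin d → Bool, ∀ i : Fin d, (∀ j : Fin d, j < i → ε j = ε' j) → t ε i = t ε' i) ∧
    ∀ ε : Fin d → Bool, Realizable H (fun i => (t ε i, ε i))

/-- The Littlestone dimension `LD(H)`: the largest `d` such that `H` shatters a mistake tree of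
depth `d` (equal to `∞` if `H` shatters arbitrarily deep trees). -/
noncomputable def littlestoneDim (H : Set (X → Bool)) : ℕ∞ :=
  ⨆ (d : ℕ) (_ : ShattersTree H d), (d : ℕ∞)

end ContradictionGraph

namespace ContradictionGraph

lemma shatters_combine {X : Type*} {H : Set (X → Bool)} (x : X) {d : ℕ}
    (h0 : ShattersTree {h | h ∈ H ∧ h x = false} d)
    (h1 : ShattersTree {h | h ∈ H ∧ h x = true} d) :
    ShattersTree H (d + 1) := by
  obtain ⟨t0, ht0p, ht0r⟩ := h0
  obtain ⟨t1, ht1p, ht1r⟩ := h1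
  refine ⟨fun ε => Fin.cons x ((if ε 0 = true then t1 else t0) (fun j => ε j.succ)), ?_, ?_⟩
  · intro ε ε' i
    induction i using Fin.cases with
    | zero => intro _; simp
    | succ j =>
      intro hpre
      have h0eq : ε 0 = ε' 0 := hpre 0 (Fin.succ_pos j)
      simp only [Fin.cons_succ]
      rw [h0eq]
      by_cases hb : ε' 0 = true
      · rw [if_pos hb]
        exact ht1p _ _ j (fun j' hj' => hpre j'.succ (by rwa [Fin.succ_lt_succ_iff]))
      · rw [if_neg hb]
        exact ht0p _ _ j (fun j' hj' => hpre j'.succ (by rwa [Fin.succ_lt_succ_iff]))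
  · intro ε
    by_cases hb : ε 0 = true
    · obtain ⟨h, ⟨hmem, hx⟩, hcons⟩ := ht1r (fun j => ε j.succ)
      refine ⟨h, hmem, fun i => ?_⟩
      induction i using Fin.cases with
      | zero => simpa [hb] using hx
      | succ j => simpa [hb] using hcons j
    · obtain ⟨h, ⟨hmem, hx⟩, hcons⟩ := ht0r (fun j => ε j.succ)
      refine ⟨h, hmem, fun i => ?_⟩
      induction i using Fin.cases with
      | zero =>
        simp only [Bool.not_eq_true] at hb
        simpa [hb] using hx
      | succ j => simpa [hb] using hcons j

lemma key {X : Type*} [DecidableEq X] : ∀ (d : ℕ) (H : Set (X → Bool)) (m : ℕ)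
    (C : Finset (Fin m → X × Bool)),
    (∀ S ∈ C, Realizable H S) →
    (∀ S ∈ C, ∀ S' ∈ C, S ≠ S' → Contradicts S S') →
    (2 * m + 1) ^ d < C.card → ShattersTree H (d + 1) := by
  intro d
  induction d with
  | zero =>
    intro H m C hreal hcontra hcard
    simp only [pow_zero] at hcard
    obtain ⟨S, hS, S', hS', hne⟩ := Finset.one_lt_card.mp hcard
    obtain ⟨x, hx⟩ := hcontra S hS S' hS' hne
    obtain ⟨h, hh, hch⟩ := hreal S hS
    obtain ⟨h', hh', hch'⟩ := hreal S' hS'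
    obtain ⟨hf, hhf, hfx⟩ : ∃ g ∈ H, g x = false := by
      rcases hx with ⟨⟨i, hi⟩, _⟩ | ⟨_, ⟨j, hj⟩⟩
      · exact ⟨h, hh, by have := hch i; rw [hi] at this; exact this⟩
      · exact ⟨h', hh', by have := hch' j; rw [hj] at this; exact this⟩
    obtain ⟨ht, hht, htx⟩ : ∃ g ∈ H, g x = true := by
      rcases hx with ⟨_, ⟨j, hj⟩⟩ | ⟨⟨i, hi⟩, _⟩
      · exact ⟨h', hh', by have := hch' j; rw [hj] at this; exact this⟩
      · exact ⟨h, hh, by have := hch i; rw [hi] at this; exact this⟩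
    refine ⟨fun _ _ => x, fun _ _ _ _ => rfl, fun ε => ?_⟩
    by_cases hb : ε 0 = true
    · exact ⟨ht, hht, fun i => by rw [Fin.eq_zero i]; simpa [hb] using htx⟩
    · simp only [Bool.not_eq_true] at hb
      exact ⟨hf, hhf, fun i => by rw [Fin.eq_zero i]; simpa [hb] using hfx⟩
  | succ d ih =>
    intro H m C hreal hcontra hcard
    set k := (2 * m + 1) ^ d with hk
    by_cases hA : ∃ x : X,
        k < (C.filter (fun S => ∃ i, S i = (x, false))).card ∧
        k < (C.filter (fun S => ∃ i, S i = (x, true))).card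
    · obtain ⟨x, hA0, hA1⟩ := hA
      have hshat : ∀ b : Bool,
          k < (C.filter (fun S => ∃ i, S i = (x, b))).card →
          ShattersTree {h | h ∈ H ∧ h x = b} (d + 1) := by
        intro b hcardb
        refine ih {h | h ∈ H ∧ h x = b} m (C.filter (fun S => ∃ i, S i = (x, b)))
          ?_ ?_ hcardb
        · intro S hS
          rw [Finset.mem_filter] at hS
          obtain ⟨hSC, i, hi⟩ := hS
          obtain ⟨h, hh, hch⟩ := hreal S hSC
          refine ⟨h, ⟨hh, ?_⟩, hch⟩
          have := hch i; rw [hi] at this; exact this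
        · intro S hS S' hS' hne
          rw [Finset.mem_filter] at hS hS'
          exact hcontra S hS.1 S' hS'.1 hne
      exact shatters_combine x (hshat false hA0) (hshat true hA1)
    · exfalso
      push_neg at hA
      have hA' : ∀ x : X, (C.filter (fun S => ∃ i, S i = (x, false))).card ≤ k ∨
          (C.filter (fun S => ∃ i, S i = (x, true))).card ≤ k := by
        intro x
        rcases le_or_gt (C.filter (fun S => ∃ i, S i = (x, false))).card k with h | h
        · exact Or.inl h
        · exact Or.inr (hA x h)
      set D : (Fin m → X × Bool) → Finset (Fin m → X × Bool) := fun S =>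
        C.filter (fun S' => ∃ i : Fin m,
          (C.filter (fun T => ∃ a, T a = ((S i).1, !(S i).2))).card ≤ k ∧
          ∃ j, S' j = ((S i).1, !(S i).2)) with hD
      have hDcard : ∀ S, (D S).card ≤ m * k := by
        intro S
        have hsub : D S ⊆ Finset.univ.biUnion (fun i : Fin m =>
            if (C.filter (fun T => ∃ a, T a = ((S i).1, !(S i).2))).card ≤ k
            then C.filter (fun T => ∃ a, T a = ((S i).1, !(S i).2))
            else ∅) := by
          intro S' hS'
          simp only [hD, Finset.mem_filter] at hS'
          obtain ⟨hS'C, i, hle, hj⟩ := hS'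
          rw [Finset.mem_biUnion]
          refine ⟨i, Finset.mem_univ i, ?_⟩
          rw [if_pos hle, Finset.mem_filter]
          exact ⟨hS'C, hj⟩
        calc (D S).card ≤ _ := Finset.card_le_card hsub
          _ ≤ ∑ i : Fin m, (if (C.filter (fun T => ∃ a, T a = ((S i).1, !(S i).2))).card ≤ k
              then C.filter (fun T => ∃ a, T a = ((S i).1, !(S i).2))
              else ∅).card := Finset.card_biUnion_le
          _ ≤ ∑ _i : Fin m, k := by
              refine Finset.sum_le_sum fun i _ => ?_
              by_cases hle : (C.filter (fun T => ∃ a, T a = ((S i).1, !(S i).2))).card ≤ k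
              · rw [if_pos hle]; exact hle
              · rw [if_neg hle]; simp
          _ = m * k := by simp [mul_comm]
      have hedge : ∀ S ∈ C, ∀ S' ∈ C, S ≠ S' → S' ∈ D S ∨ S ∈ D S' := by
        intro S hS S' hS' hne
        obtain ⟨x, hx⟩ := hcontra S hS S' hS' hne
        rcases hx with ⟨⟨i, hi⟩, ⟨j, hj⟩⟩ | ⟨⟨i, hi⟩, ⟨j, hj⟩⟩
        · -- S i = (x, false), S' j = (x, true)
          rcases hA' x with hle | hle
          · -- few datasets contain (x, false); S ∈ D S' via flip of S' j
            right
            simp only [hD, Finset.mem_filter]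
            refine ⟨hS, j, ?_, ⟨i, ?_⟩⟩
            · rw [hj]; simpa using hle
            · rw [hj]; simpa using hi
          · -- few datasets contain (x, true); S' ∈ D S via flip of S i
            left
            simp only [hD, Finset.mem_filter]
            refine ⟨hS', i, ?_, ⟨j, ?_⟩⟩
            · rw [hi]; simpa using hle
            · rw [hi]; simpa using hj
        · -- S i = (x, true), S' j = (x, false)
          rcases hA' x with hle | hle
          · -- few datasets contain (x, false); S' ∈ D S via flip of S i
            left
            simp only [hD, Finset.mem_filter]
            refine ⟨hS', i, ?_, ⟨j, ?_⟩⟩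
            · rw [hi]; simpa using hle
            · rw [hi]; simpa using hj
          · -- few datasets contain (x, true); S ∈ D S' via flip of S' j
            right
            simp only [hD, Finset.mem_filter]
            refine ⟨hS, j, ?_, ⟨i, ?_⟩⟩
            · rw [hj]; simpa using hle
            · rw [hj]; simpa using hi
      have hoff : C.offDiag.card ≤ 2 * (C.card * (m * k)) := by
        have hsplit : C.offDiag ⊆
            C.offDiag.filter (fun p => p.2 ∈ D p.1) ∪
            C.offDiag.filter (fun p => p.1 ∈ D p.2) := by
          intro p hp
          have hp' := Finset.mem_offDiag.mp hp
          rcases hedge p.1 hp'.1 p.2 hp'.2.1 hp'.2.2 with h | h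
          · exact Finset.mem_union_left _ (Finset.mem_filter.mpr ⟨hp, h⟩)
          · exact Finset.mem_union_right _ (Finset.mem_filter.mpr ⟨hp, h⟩)
        have hb1 : (C.offDiag.filter (fun p => p.2 ∈ D p.1)).card ≤ C.card * (m * k) := by
          have hsub : C.offDiag.filter (fun p => p.2 ∈ D p.1) ⊆
              C.biUnion (fun S => (D S).image (Prod.mk S)) := by
            intro p hp
            rw [Finset.mem_filter] at hp
            have hp' := Finset.mem_offDiag.mp hp.1
            rw [Finset.mem_biUnion]
            exact ⟨p.1, hp'.1, Finset.mem_image.mpr ⟨p.2, hp.2, rfl⟩⟩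
          calc _ ≤ _ := Finset.card_le_card hsub
            _ ≤ ∑ S ∈ C, ((D S).image (Prod.mk S)).card := Finset.card_biUnion_le
            _ ≤ ∑ _S ∈ C, (m * k) := Finset.sum_le_sum fun S _ =>
                le_trans Finset.card_image_le (hDcard S)
            _ = C.card * (m * k) := by rw [Finset.sum_const, smul_eq_mul]
        have hb2 : (C.offDiag.filter (fun p => p.1 ∈ D p.2)).card ≤ C.card * (m * k) := by
          have hsub : C.offDiag.filter (fun p => p.1 ∈ D p.2) ⊆
              C.biUnion (fun S => (D S).image (fun S' => (S', S))) := by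
            intro p hp
            rw [Finset.mem_filter] at hp
            have hp' := Finset.mem_offDiag.mp hp.1
            rw [Finset.mem_biUnion]
            exact ⟨p.2, hp'.2.1, Finset.mem_image.mpr ⟨p.1, hp.2, rfl⟩⟩
          calc _ ≤ _ := Finset.card_le_card hsub
            _ ≤ ∑ S ∈ C, ((D S).image (fun S' => (S', S))).card := Finset.card_biUnion_le
            _ ≤ ∑ _S ∈ C, (m * k) := Finset.sum_le_sum fun S _ =>
                le_trans Finset.card_image_le (hDcard S)
            _ = C.card * (m * k) := by rw [Finset.sum_const, smul_eq_mul]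
        calc C.offDiag.card ≤ _ := Finset.card_le_card hsplit
          _ ≤ _ := Finset.card_union_le _ _
          _ ≤ 2 * (C.card * (m * k)) := by omega
      rw [Finset.offDiag_card] at hoff
      have hkpos : 1 ≤ k := Nat.one_le_iff_ne_zero.mpr (pow_ne_zero d (by omega))
      have hnpos : 0 < C.card := by
        have := hcard; omega
      have hexp : 2 * (m * k) + k < C.card := by
        have h1 : (2 * m + 1) ^ (d + 1) = 2 * (m * k) + k := by
          rw [pow_succ, ← hk]; ring
        omega
      have h1 : C.card * (C.card - 1) ≤ C.card * (2 * (m * k)) := by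
        calc C.card * (C.card - 1) = C.card * C.card - C.card := by
              rw [Nat.mul_sub, mul_one]
          _ ≤ 2 * (C.card * (m * k)) := hoff
          _ = C.card * (2 * (m * k)) := by ring
      have h2 : C.card - 1 ≤ 2 * (m * k) := Nat.le_of_mul_le_mul_left h1 hnpos
      have hgen : ∃ q : ℕ, q = m * k := ⟨m * k, rfl⟩
      obtain ⟨q, hq⟩ := hgen
      rw [← hq] at h2 hexp
      omega

/-- If `H` has Littlestone dimension `LD(H) = d < ∞`, then for every `m ∈ ℕ`
the clique number of the contradiction graph satisfies `ω_m ≤ (2m+1)^d`. -/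
theorem cliqueNum_le_of_littlestoneDim {X : Type*} [Countable X]
    (H : Set (X → Bool)) (hH : H.Nonempty) (d : ℕ)
    (hLD : littlestoneDim H = (d : ℕ∞)) :
    ∀ m : ℕ, cliqueNum H m ≤ (2 * m + 1) ^ d := by
  classical
  have hno : ¬ ShattersTree H (d + 1) := by
    intro hs
    have hle : ((d + 1 : ℕ) : ℕ∞) ≤ littlestoneDim H :=
      le_iSup₂ (f := fun (d' : ℕ) (_ : ShattersTree H d') => ((d' : ℕ) : ℕ∞)) (d + 1) hs
    rw [hLD] at hle
    exact absurd hle (by exact_mod_cast Nat.not_succ_le_self d)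
  intro m
  rw [cliqueNum]
  refine iSup₂_le fun C hC => ?_
  by_contra hlt
  push_neg at hlt
  have hlt' : (((2 * m + 1) ^ d : ℕ) : ℕ∞) < C.encard := by
    push_cast
    exact hlt
  have hle1 : ((((2 * m + 1) ^ d + 1 : ℕ)) : ℕ∞) ≤ C.encard := by
    exact_mod_cast Order.add_one_le_of_lt hlt'
  obtain ⟨t, htsub, htcard⟩ := Set.exists_subset_encard_eq hle1
  have htfin : t.Finite := Set.finite_of_encard_eq_coe htcard
  set C' : Finset (Fin m → X × Bool) := htfin.toFinset.image Subtype.val with hC'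
  have hC'card : C'.card = (2 * m + 1) ^ d + 1 := by
    rw [hC', Finset.card_image_of_injective _ Subtype.val_injective]
    have : (htfin.toFinset.card : ℕ∞) = (((2 * m + 1) ^ d + 1 : ℕ) : ℕ∞) := by
      rw [← htfin.encard_eq_coe_toFinset_card, htcard]
    exact_mod_cast this
  have hmemC' : ∀ S ∈ C', ∃ v : Vm H m, v ∈ t ∧ v.1 = S := by
    intro S hS
    rw [hC', Finset.mem_image] at hS
    obtain ⟨v, hv, rfl⟩ := hS
    exact ⟨v, htfin.mem_toFinset.mp hv, rfl⟩
  have hreal : ∀ S ∈ C', Realizable H S := by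
    intro S hS
    obtain ⟨v, _, rfl⟩ := hmemC' S hS
    exact v.2
  have hcontra : ∀ S ∈ C', ∀ S' ∈ C', S ≠ S' → Contradicts S S' := by
    intro S hS S' hS' hne
    obtain ⟨v, hv, rfl⟩ := hmemC' S hS
    obtain ⟨v', hv', rfl⟩ := hmemC' S' hS'
    exact hC v (htsub hv) v' (htsub hv') (fun h => hne (by rw [h]))
  have hshat : ShattersTree H (d + 1) :=
    key d H m C' hreal hcontra (by rw [hC'card]; omega)
  exact hno hshat

end ContradictionGraph
end

section
/- Let γ ∈ (0, 1/2), m ≥ 2, and let T be an odd integer with T ≥ 2·log₂(m)/γ². Let S = ((x_1,y_1),…,(x_m,y_m)) be a dataset of size m realizable by H. Then there exist maps D_1, D_2, …, D_T, where D_t assigns to each (t−1)-tuple (h_1,…,h_{t−1}) of hypotheses a probability distribution D_t(h_1,…,h_{t−1}) supported on the labeled examples { (x_1,y_1),…,(x_m,y_m) } of S (hence realizable by H), such that for every sequence of hypotheses h_1,…,h_T: if L_{D_t(h_1,…,h_{t−1})}(h_t) ≤ 1/2 − γ for every t ≤ T, then the majority vote MAJ(h_1,…,h_T) is consistent with S.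 -/
open MeasureTheory
open scoped ENNReal

namespace ContradictionGraph
variable {X : Type*} [MeasurableSpace X]

/-- The population loss `L_D(h) = Pr_{(x,y) ∼ D} [h(x) ≠ y]`. -/
noncomputable def popLoss (D : Measure (X × Bool)) (h : X → Bool) : ℝ≥0∞ :=
  D {p | h p.1 ≠ p.2}

/-- A distribution over labeled examples is realizable by `H` if `inf_{h ∈ H} L_D(h) = 0`. -/
def RealizableDist (H : Set (X → Bool)) (D : Measure (X × Bool)) : Prop :=
  (⨅ h ∈ H, popLoss D h) = 0

/-- `A` is an `(m, α, β)`-learner for `H`: for every realizable distribution `D`, the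
probability over `S ∼ D^m` and `h ∼ A(S)` that `L_D(h) > α` is less than `β`. -/
def IsLearner (H : Set (X → Bool)) (m : ℕ) (A : (Fin m → X × Bool) → Measure (X → Bool))
    (α β : ℝ) : Prop :=
  ∀ D : Measure (X × Bool), IsProbabilityMeasure D → RealizableDist H D →
    (∫⁻ S, A S {h | ENNReal.ofReal α < popLoss D h} ∂(Measure.pi fun _ : Fin m => D))
      < ENNReal.ofReal β

/-- Two datasets of size `m` are neighboring if they differ in at most a single example. -/
def Neighboring {m : ℕ} (S S' : Fin m → X × Bool) : Prop :=
  ∃ i : Fin m, ∀ j, j ≠ i → S j = S' j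

/-- `A` is `(ε, δ)`-differentially private: for all neighboring input datasets and every
(Borel) event `E`, `Pr[A(S) ∈ E] ≤ e^ε · Pr[A(S') ∈ E] + δ`. -/
def IsDP {m : ℕ} (A : (Fin m → X × Bool) → Measure (X → Bool)) (ε δ : ℝ) : Prop :=
  ∀ S S' : Fin m → X × Bool, Neighboring S S' → ∀ E : Set (X → Bool), MeasurableSet E →
    A S E ≤ ENNReal.ofReal (Real.exp ε) * A S' E + ENNReal.ofReal δ

/-- `H` is approximately differentially privately PAC learnable. -/
def ApproxDPLearnable (H : Set (X → Bool)) : Prop :=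
  ∃ ε₀ : ℝ, 0 < ε₀ ∧ ∃ α β δ : ℕ → ℝ,
    Filter.Tendsto α Filter.atTop (nhds 0) ∧
    Filter.Tendsto β Filter.atTop (nhds 0) ∧
    (∀ m, 0 ≤ δ m) ∧
    (∀ c : ℝ, 0 < c → Filter.Tendsto (fun m : ℕ => (m : ℝ) ^ c * δ m) Filter.atTop (nhds 0)) ∧
    ∃ A : (m : ℕ) → (Fin m → X × Bool) → Measure (X → Bool),
      (∀ m S, IsProbabilityMeasure (A m S)) ∧
      (∀ m, IsDP (A m) ε₀ (δ m)) ∧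
      (∀ m, IsLearner H m (A m) (α m) (β m))

/-- `H` is pure differentially privately PAC learnable. -/
def PureDPLearnable (H : Set (X → Bool)) : Prop :=
  ∃ ε₀ : ℝ, 0 < ε₀ ∧ ∃ α β : ℕ → ℝ,
    Filter.Tendsto α Filter.atTop (nhds 0) ∧
    Filter.Tendsto β Filter.atTop (nhds 0) ∧
    ∃ A : (m : ℕ) → (Fin m → X × Bool) → Measure (X → Bool),
      (∀ m S, IsProbabilityMeasure (A m S)) ∧
      (∀ m, IsDP (A m) ε₀ 0) ∧
      (∀ m, IsLearner H m (A m) (α m) (β m))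

end ContradictionGraph

namespace ContradictionGraph
variable {X : Type*}

/-- The majority vote of `T` hypotheses: `x ↦ 1` iff `|{t : h_t(x) = 1}| > T/2`. -/
def Maj (T : ℕ) (h : Fin T → X → Bool) : X → Bool :=
  fun x => decide (T < 2 * (Finset.univ.filter fun t => h t x = true).card)

end ContradictionGraph

/-!
Multiplicative weights. Put weight `c ^ k` on the `i`-th example of `S`, where `k` is the number
of earlier hypotheses that err on it and `c = (1 + 2γ)/(1 - 2γ)`, and let `D_t` be the normalized
weights. A hypothesis of loss at most `1/2 - γ` under `D_t` multiplies the total weight by at most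
`1 + (c - 1)(1/2 - γ) = 1 + 2γ`, so after `T` rounds the total weight is at most `m (1 + 2γ)^T`.
If the majority vote erred on an example, at least half of the hypotheses erred on it, so its
weight alone would be at least `c^(T/2)`; this forces `1 ≤ m² (1 - 4γ²)^T`, whereas
`(1 - 4γ²)^T ≤ exp (-4γ²T) < m⁻²` by the choice of `T`.
-/

open Finset

namespace ContradictionGraph

section WeightedEmpirical

variable {ι α : Type*} [Fintype ι] [MeasurableSpace α]

noncomputable def weightedEmpirical (w : ι → ℝ) (S : ι → α) : Measure α :=
  ∑ i, ENNReal.ofReal (w i / ∑ j, w j) • Measure.dirac (S i)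

variable {w : ι → ℝ} {S : ι → α}

lemma weightedEmpirical_eq_one [Nonempty ι] (hw : ∀ i, 0 < w i) {A : Set α}
    (hA : ∀ i, S i ∈ A) : weightedEmpirical w S A = 1 := by
  have hW : 0 < ∑ i, w i := sum_pos (fun i _ => hw i) univ_nonempty
  simp only [weightedEmpirical, Measure.finsetSum_apply, Measure.smul_apply,
    Measure.dirac_apply_of_mem (hA _), smul_eq_mul, mul_one]
  rw [← ENNReal.ofReal_sum_of_nonneg fun i _ => (div_pos (hw i) hW).le, ← sum_div,
    div_self hW.ne', ENNReal.ofReal_one]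

lemma isProbabilityMeasure_weightedEmpirical [Nonempty ι] (hw : ∀ i, 0 < w i) :
    IsProbabilityMeasure (weightedEmpirical w S) :=
  ⟨weightedEmpirical_eq_one hw fun _ => Set.mem_univ _⟩

lemma ofReal_sum_div_le_weightedEmpirical (hw : ∀ i, 0 ≤ w i) (A : Set α)
    [DecidablePred (· ∈ A)] :
    ENNReal.ofReal ((∑ i with S i ∈ A, w i) / ∑ j, w j) ≤ weightedEmpirical w S A := by
  rw [sum_div, ENNReal.ofReal_sum_of_nonneg fun i _ =>
      div_nonneg (hw i) (sum_nonneg fun j _ => hw j),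
    sum_filter, weightedEmpirical, Measure.finsetSum_apply]
  refine sum_le_sum fun i _ => ?_
  split_ifs with hi
  · simp [Measure.dirac_apply_of_mem hi]
  · exact zero_le

lemma sum_le_mul_of_weightedEmpirical_le (hw : ∀ i, 0 ≤ w i) {A : Set α} [DecidablePred (· ∈ A)]
    {r : ℝ} (hr : 0 ≤ r) (hA : weightedEmpirical w S A ≤ ENNReal.ofReal r) :
    ∑ i with S i ∈ A, w i ≤ r * ∑ i, w i := by
  have hle := (ofReal_sum_div_le_weightedEmpirical hw A).trans hA
  rw [ENNReal.ofReal_le_ofReal_iff hr] at hle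
  rcases (sum_nonneg fun i (_ : i ∈ univ) => hw i).eq_or_lt with hW | hW
  · rw [← hW, mul_zero]
    exact (sum_le_sum_of_subset_of_nonneg (filter_subset _ _) fun i _ _ => hw i).trans hW.ge
  · rwa [div_le_iff₀ hW] at hle

end WeightedEmpirical

section MultiplicativeWeights

variable {ι : Type*} [Fintype ι]

lemma sum_pow_add_ite (c : ℝ) (k : ι → ℕ) (P : ι → Prop) [DecidablePred P] :
    ∑ i, c ^ (k i + if P i then 1 else 0) = ∑ i, c ^ k i + (c - 1) * ∑ i with P i, c ^ k i := by
  rw [sum_filter, mul_sum, ← sum_add_distrib]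
  refine sum_congr rfl fun i _ => ?_
  split_ifs <;> ring

lemma sum_pow_add_ite_le {c r : ℝ} {k : ι → ℕ} {P : ι → Prop} [DecidablePred P] (hc : 1 ≤ c)
    (hP : ∑ i with P i, c ^ k i ≤ r * ∑ i, c ^ k i) :
    ∑ i, c ^ (k i + if P i then 1 else 0) ≤ (1 + (c - 1) * r) * ∑ i, c ^ k i := by
  rw [sum_pow_add_ite]
  nlinarith [mul_le_mul_of_nonneg_left hP (sub_nonneg.2 hc)]

end MultiplicativeWeights

section Mistakes

variable {X : Type*}

def mistakes {n : ℕ} (hs : Fin n → X → Bool) (p : X × Bool) : ℕ :=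
  #{s | hs s p.1 ≠ p.2}

lemma mistakes_succ {n : ℕ} (hs : Fin (n + 1) → X → Bool) (p : X × Bool) :
    mistakes hs p =
      mistakes (fun s => hs s.castSucc) p + if hs (Fin.last n) p.1 ≠ p.2 then 1 else 0 := by
  simp only [mistakes, card_filter, Fin.sum_univ_castSucc]

lemma le_two_mul_mistakes_of_maj_ne {T : ℕ} (h : Fin T → X → Bool) {p : X × Bool}
    (hp : Maj T h p.1 ≠ p.2) : T ≤ 2 * mistakes h p := by
  obtain ⟨x, y⟩ := p
  have hsplit := card_filter_add_card_filter_not (s := univ) fun t => h t x = true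
  simp only [Bool.not_eq_true, card_univ, Fintype.card_fin] at hsplit
  cases y <;> simp_all [Maj, mistakes] <;> omega

end Mistakes

lemma sq_mul_one_sub_pow_lt_one {γ : ℝ} (hγ0 : 0 < γ) (hγ1 : γ < 1 / 2) {m T : ℕ} (hm : 2 ≤ m)
    (hT : 2 * Real.logb 2 m / γ ^ 2 ≤ T) : (m : ℝ) ^ 2 * (1 - 4 * γ ^ 2) ^ T < 1 := by
  have hlog_pos : 0 < Real.log m := Real.log_pos (by exact_mod_cast hm)
  have hlog_lt : Real.log m < Real.logb 2 m := by
    rw [Real.logb, lt_div_iff₀ (Real.log_pos one_lt_two)]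
    exact mul_lt_of_lt_one_right hlog_pos (Real.log_two_lt_d9.trans (by norm_num))
  have hTγ : 2 * Real.logb 2 m ≤ T * γ ^ 2 := (div_le_iff₀ (by positivity)).1 hT
  calc (m : ℝ) ^ 2 * (1 - 4 * γ ^ 2) ^ T ≤ (m : ℝ) ^ 2 * Real.exp (-(4 * γ ^ 2)) ^ T := by
        gcongr
        · nlinarith
        · linarith [Real.add_one_le_exp (-(4 * γ ^ 2))]
    _ = Real.exp (Real.log m) ^ 2 * Real.exp (-(4 * γ ^ 2)) ^ T := by
        rw [Real.exp_log (by positivity)]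
    _ = Real.exp (2 * Real.log m - T * (4 * γ ^ 2)) := by
        rw [← Real.exp_nat_mul, ← Real.exp_nat_mul, ← Real.exp_add]
        congr 1
        push_cast
        ring
    _ < Real.exp 0 := Real.exp_lt_exp.2 (by nlinarith)
    _ = 1 := Real.exp_zero

lemma two_mul_lt_of_pow_le {γ : ℝ} (hγ0 : 0 ≤ γ) (hγ1 : γ < 1 / 2) {m T K : ℕ}
    (hmT : (m : ℝ) ^ 2 * (1 - 4 * γ ^ 2) ^ T < 1)
    (hK : ((1 + 2 * γ) / (1 - 2 * γ)) ^ K ≤ (1 + 2 * γ) ^ T * m) : 2 * K < T := by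
  by_contra! hTK
  have hγ2 : 0 < 1 - 2 * γ := by linarith
  have hc : 1 ≤ (1 + 2 * γ) / (1 - 2 * γ) := by rw [le_div_iff₀ hγ2]; linarith
  have hcT : ((1 + 2 * γ) / (1 - 2 * γ)) ^ T ≤ ((1 + 2 * γ) ^ T * m) ^ 2 := by
    calc _ ≤ ((1 + 2 * γ) / (1 - 2 * γ)) ^ (2 * K) := pow_le_pow_right₀ hc hTK
      _ = (((1 + 2 * γ) / (1 - 2 * γ)) ^ K) ^ 2 := pow_mul' _ _ _
      _ ≤ _ := by gcongr
  rw [div_pow, div_le_iff₀ (by positivity)] at hcT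
  have hsplit : (1 - 4 * γ ^ 2) ^ T = (1 + 2 * γ) ^ T * (1 - 2 * γ) ^ T := by
    rw [← mul_pow]; ring
  have : (1 + 2 * γ) ^ T ≤ (1 + 2 * γ) ^ T * ((m : ℝ) ^ 2 * (1 - 4 * γ ^ 2) ^ T) := by
    rw [hsplit]; linarith
  exact this.not_gt ((mul_lt_iff_lt_one_right (by positivity)).2 hmT)

section Boosting

variable {X : Type*} [MeasurableSpace X] {m : ℕ}

noncomputable def multiplicativeWeights (c : ℝ) (S : Fin m → X × Bool) {n : ℕ}
    (hs : Fin n → X → Bool) : Measure (X × Bool) :=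
  weightedEmpirical (fun i => c ^ mistakes hs (S i)) S

lemma multiplicativeWeights_range_eq_one {c : ℝ} (hc : 0 < c) [NeZero m] (S : Fin m → X × Bool)
    {n : ℕ} (hs : Fin n → X → Bool) : multiplicativeWeights c S hs (Set.range S) = 1 :=
  weightedEmpirical_eq_one (fun _ => pow_pos hc _) Set.mem_range_self

lemma isProbabilityMeasure_multiplicativeWeights {c : ℝ} (hc : 0 < c) [NeZero m]
    (S : Fin m → X × Bool) {n : ℕ} (hs : Fin n → X → Bool) :
    IsProbabilityMeasure (multiplicativeWeights c S hs) :=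
  isProbabilityMeasure_weightedEmpirical fun _ => pow_pos hc _

lemma sum_pow_mistakes_le {c r : ℝ} (hc : 1 ≤ c) (hr : 0 ≤ r) (S : Fin m → X × Bool) {T : ℕ}
    (h : Fin T → X → Bool)
    (hloss : ∀ t : Fin T,
      popLoss (multiplicativeWeights c S fun j : Fin t.1 => h ⟨j.1, j.2.trans t.2⟩) (h t) ≤
        ENNReal.ofReal r) :
    ∑ i, c ^ mistakes h (S i) ≤ (1 + (c - 1) * r) ^ T * m := by
  suffices ∀ n (hn : n ≤ T), ∑ i, c ^ mistakes (fun j : Fin n => h ⟨j.1, j.2.trans_le hn⟩) (S i) ≤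
      (1 + (c - 1) * r) ^ n * m from this T le_rfl
  intro n hn
  induction n with
  | zero => simp [mistakes]
  | succ n ih =>
    have hround := sum_le_mul_of_weightedEmpirical_le (fun i => by positivity) hr (hloss ⟨n, hn⟩)
    simp only [mistakes_succ]
    calc _ ≤ (1 + (c - 1) * r) *
          ∑ i, c ^ mistakes (fun j : Fin n => h ⟨j.1, j.2.trans hn⟩) (S i) :=
          sum_pow_add_ite_le hc hround
      _ ≤ (1 + (c - 1) * r) * ((1 + (c - 1) * r) ^ n * m) := by
          gcongr
          exact ih (Nat.le_of_succ_le hn)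
      _ = (1 + (c - 1) * r) ^ (n + 1) * m := by ring

end Boosting

theorem experts_lemma_general {X : Type*}
    [MeasurableSpace X]
    (γ : ℝ) (hγ0 : 0 < γ) (hγ1 : γ < 1 / 2)
    (m : ℕ) (hm : 2 ≤ m)
    (T : ℕ) (hT : 2 * Real.logb 2 m / γ ^ 2 ≤ T)
    (S : Fin m → X × Bool) :
    ∃ D : (t : Fin T) → (Fin t.1 → X → Bool) → Measure (X × Bool),
      (∀ (t : Fin T) (prev : Fin t.1 → X → Bool),
        IsProbabilityMeasure (D t prev) ∧ D t prev (Set.range S) = 1) ∧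
      ∀ h : Fin T → X → Bool,
        (∀ t : Fin T,
          popLoss (D t fun j => h ⟨j.1, j.2.trans t.2⟩) (h t) ≤ ENNReal.ofReal (1 / 2 - γ)) →
        Consistent (Maj T h) S := by
  set c := (1 + 2 * γ) / (1 - 2 * γ)
  have hγ2 : 0 < 1 - 2 * γ := by linarith
  have hc : 1 ≤ c := by rw [le_div_iff₀ hγ2]; linarith
  have : NeZero m := ⟨by omega⟩
  refine ⟨fun _ prev => multiplicativeWeights c S prev, fun _ prev =>
    ⟨isProbabilityMeasure_multiplicativeWeights (by positivity) S prev,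
      multiplicativeWeights_range_eq_one (by positivity) S prev⟩, fun h hloss i => ?_⟩
  by_contra hi
  have hrate : 1 + (c - 1) * (1 / 2 - γ) = 1 + 2 * γ := by simp only [c]; field_simp; ring
  have hpot := sum_pow_mistakes_le hc (by linarith) S h hloss
  rw [hrate] at hpot
  have hK : c ^ mistakes h (S i) ≤ (1 + 2 * γ) ^ T * m :=
    (single_le_sum (f := fun j => c ^ mistakes h (S j)) (fun j _ => by positivity)
      (mem_univ i)).trans hpot
  exact (two_mul_lt_of_pow_le hγ0.le hγ1 (sq_mul_one_sub_pow_lt_one hγ0 hγ1 hm hT) hK).not_ge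
    (le_two_mul_mistakes_of_maj_ne h hi)

/-- (Experts lemma.) Let `γ ∈ (0,1/2)`, `m ≥ 2`, and let `T` be an odd
integer with `T ≥ 2·log₂(m)/γ²`. Let `S` be a dataset of size `m` realizable by `H`. Then there
exist maps `D_1, …, D_T`, where `D_t` assigns to each `(t−1)`-tuple of hypotheses a probability
distribution supported on the labeled examples of `S` (hence realizable by `H`), such that for
every sequence of hypotheses `h_1, …, h_T`: if `L_{D_t(h_1,…,h_{t−1})}(h_t) ≤ 1/2 − γ` for
every `t ≤ T`, then the majority vote `MAJ(h_1,…,h_T)` is consistent with `S`. -/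
theorem experts_lemma {X : Type*} [Countable X]
    [MeasurableSpace X] [MeasurableSingletonClass X]
    (H : Set (X → Bool)) (hH : H.Nonempty)
    (γ : ℝ) (hγ0 : 0 < γ) (hγ1 : γ < 1 / 2)
    (m : ℕ) (hm : 2 ≤ m)
    (T : ℕ) (hTodd : Odd T) (hT : 2 * Real.logb 2 m / γ ^ 2 ≤ T)
    (S : Fin m → X × Bool) (hS : Realizable H S) :
    ∃ D : (t : Fin T) → (Fin t.1 → X → Bool) → Measure (X × Bool),
      (∀ (t : Fin T) (prev : Fin t.1 → X → Bool),
        IsProbabilityMeasure (D t prev) ∧ D t prev (Set.range S) = 1) ∧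
      ∀ h : Fin T → X → Bool,
        (∀ t : Fin T,
          popLoss (D t fun j => h ⟨j.1, j.2.trans t.2⟩) (h t) ≤ ENNReal.ofReal (1 / 2 - γ)) →
        Consistent (Maj T h) S :=
  experts_lemma_general γ hγ0 hγ1 m hm T hT S

end ContradictionGraph
end
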